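/- For the annulus Ω_r = {r < |z| < 1}, the Szegő metric at the point √r in the unit direction satisfies lim_{r→0⁺} √r · F_S^{Ω_r}(√r, 1) = 1/2. -/

import Mathlib

open Real Filter Topology

/-- `α₀(r,t) = S_r(t,t)`: diagonal Szegő kernel of the annulus `{r < |z| < 1}` w.r.t.
arclength, at a point of modulus `t`. -/
noncomputable def alpha0 (r t : ℝ) : ℝ := (1/(2*π)) * ∑' n : ℤ, t ^ (2*n) / (1 + r ^ (2*n+1))

/-- `α₁(r,t) = ∂_z S_r(z,z)` at `z = t > 0`. -/
noncomputable def alpha1 (r t : ℝ) : ℝ :=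
  (1/(2*π)) * ∑' n : ℤ, (n : ℝ) * t ^ (2*n-1) / (1 + r ^ (2*n+1))

/-- `α₂(r,t) = ∂_z∂_z̄ S_r(z,z)` at `z = t > 0`. -/
noncomputable def alpha2 (r t : ℝ) : ℝ :=
  (1/(2*π)) * ∑' n : ℤ, (n : ℝ)^2 * t ^ (2*n-2) / (1 + r ^ (2*n+1))

/-- The squared Szegő metric of the annulus at the point `t` in the unit direction:
`F_S(t,1)² = (α₀α₂ - α₁²)/α₀²`. -/
noncomputable def szegoMetricSq (r t : ℝ) : ℝ :=
  (alpha0 r t * alpha2 r t - (alpha1 r t)^2) / (alpha0 r t)^2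

/-!
At `z = √r` the `n`-th term of `2π S_r` is `w_r(n) = r ^ n / (1 + r ^ (2n+1))`, which is invariant
under `n ↦ -n-1`, and the factors `√r⁻¹`, `r⁻¹` in `α₁`, `α₂` cancel against the `r` in
`r F_S(√r,1)²`: this equals `(M₀M₂ - M₁²)/M₀²` for the moments `M_k = ∑_{n∈ℤ} n^k w_r(n)`.
Folding `n` onto `-n-1` writes `M_k` as a series over `ℕ` whose terms tend, as `r → 0⁺`, to
`(0^k + (-1)^k) δ_{n,0}` and are dominated by `2 (n+1)^k 2⁻ⁿ` for `r ≤ 1/2`. Dominated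
convergence gives `(M₀, M₁, M₂) → (2, -1, 1)`, hence `r F_S(√r,1)² → 1/4`.
-/

theorem summable_add_one_pow_mul_geometric (k : ℕ) {r : ℝ} (hr₀ : 0 ≤ r) (hr₁ : r < 1) :
    Summable fun n : ℕ => ((n : ℝ) + 1) ^ k * r ^ n := by
  have hdesc := summable_descFactorial_mul_geometric_of_norm_lt_one k
    (r := r) (by rwa [Real.norm_of_nonneg hr₀])
  refine hdesc.of_nonneg_of_le (fun n => by positivity) fun n => ?_
  gcongr
  have := Nat.pow_sub_le_descFactorial (n + k) k
  rw [show n + k + 1 - k = n + 1 by omega] at this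
  exact_mod_cast this

theorem abs_natCast_pow_le_add_one_pow (k n : ℕ) : |(n : ℝ) ^ k| ≤ ((n : ℝ) + 1) ^ k := by
  rw [abs_of_nonneg (by positivity)]
  gcongr
  linarith

theorem abs_neg_natCast_sub_one_pow (k n : ℕ) : |(-(n : ℝ) - 1) ^ k| = ((n : ℝ) + 1) ^ k := by
  rw [abs_pow, show -(n : ℝ) - 1 = -((n : ℝ) + 1) by ring, abs_neg, abs_of_nonneg (by positivity)]

theorem abs_pow_add_neg_sub_one_pow_le (k n : ℕ) :
    |(n : ℝ) ^ k + (-(n : ℝ) - 1) ^ k| ≤ 2 * ((n : ℝ) + 1) ^ k := by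
  linarith [abs_add_le ((n : ℝ) ^ k) ((-(n : ℝ) - 1) ^ k), abs_natCast_pow_le_add_one_pow k n,
    abs_neg_natCast_sub_one_pow k n]

noncomputable def szegoWeight (r : ℝ) (n : ℤ) : ℝ := r ^ n / (1 + r ^ (2 * n + 1))

section Weight

variable {r : ℝ}

theorem szegoWeight_neg_add_one (hr : r ≠ 0) (n : ℤ) :
    szegoWeight r (-(n + 1)) = szegoWeight r n := by
  have h₁ : r ^ (-(n + 1)) = r ^ n * (r ^ (2 * n + 1))⁻¹ := by
    rw [← zpow_neg, ← zpow_add₀ hr]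
    ring_nf
  have h₂ : r ^ (2 * -(n + 1) + 1) = (r ^ (2 * n + 1))⁻¹ := by
    rw [← zpow_neg]
    ring_nf
  have hne : r ^ (2 * n + 1) ≠ 0 := zpow_ne_zero _ hr
  rw [szegoWeight, szegoWeight, h₁, h₂]
  field_simp
  ring

theorem szegoWeight_natCast (r : ℝ) (n : ℕ) :
    szegoWeight r n = r ^ n / (1 + r ^ (2 * n + 1)) := by
  simp only [szegoWeight]
  norm_cast

theorem abs_szegoWeight_natCast_le (hr : 0 ≤ r) (n : ℕ) : |szegoWeight r n| ≤ r ^ n := by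
  rw [szegoWeight_natCast, abs_of_nonneg (by positivity)]
  exact div_le_self (by positivity) (le_add_of_nonneg_right (by positivity))

theorem tendsto_szegoWeight_natCast (n : ℕ) :
    Tendsto (fun r => szegoWeight r n) (𝓝[>] 0) (𝓝 (0 ^ n)) := by
  simp_rw [szegoWeight_natCast]
  have hcont : ContinuousAt (fun r : ℝ => r ^ n / (1 + r ^ (2 * n + 1))) 0 := by
    fun_prop (disch := simp)
  simpa using hcont.tendsto.mono_left nhdsWithin_le_nhds

end Weight

noncomputable def szegoMoment (k : ℕ) (r : ℝ) : ℝ := ∑' n : ℤ, (n : ℝ) ^ k * szegoWeight r n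

section Moment

variable {r : ℝ}

theorem abs_mul_szegoWeight_le {b c : ℝ} (hc : |c| ≤ b) (hr : 0 ≤ r) (n : ℕ) :
    |c * szegoWeight r n| ≤ b * r ^ n := by
  rw [abs_mul]
  exact mul_le_mul hc (abs_szegoWeight_natCast_le hr n) (abs_nonneg _) ((abs_nonneg c).trans hc)

theorem summable_mul_szegoWeight {b c : ℕ → ℝ} (hc : ∀ n, |c n| ≤ b n)
    (hb : Summable fun n => b n * r ^ n) (hr : 0 ≤ r) :
    Summable fun n : ℕ => c n * szegoWeight r n :=
  hb.of_norm_bounded fun n => abs_mul_szegoWeight_le (hc n) hr n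

theorem szegoMoment_eq_tsum_nat (k : ℕ) (hr₀ : 0 < r) (hr₁ : r < 1) :
    szegoMoment k r = ∑' n : ℕ, ((n : ℝ) ^ k + (-(n : ℝ) - 1) ^ k) * szegoWeight r n := by
  let f : ℤ → ℝ := fun n => (n : ℝ) ^ k * szegoWeight r n
  have hf (n : ℕ) : f (-(n + 1)) = (-(n : ℝ) - 1) ^ k * szegoWeight r n := by
    simp only [f, szegoWeight_neg_add_one hr₀.ne']
    push_cast
    ring
  have hsum := summable_add_one_pow_mul_geometric k hr₀.le hr₁
  have hpos : Summable fun n : ℕ => f n := by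
    simp only [f, Int.cast_natCast]
    exact summable_mul_szegoWeight (abs_natCast_pow_le_add_one_pow k) hsum hr₀.le
  have hneg : Summable fun n : ℕ => f (-(n + 1)) := by
    simp only [hf]
    exact summable_mul_szegoWeight (fun n => (abs_neg_natCast_sub_one_pow k n).le) hsum hr₀.le
  rw [szegoMoment, ← tsum_nat_add_neg_add_one (hpos.of_nat_of_neg_add_one hneg)]
  refine tsum_congr fun n => ?_
  rw [hf]
  simp only [f, Int.cast_natCast]
  ring

theorem tendsto_szegoMoment (k : ℕ) :
    Tendsto (szegoMoment k) (𝓝[>] 0) (𝓝 (0 ^ k + (-1) ^ k)) := by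
  have hfold : (fun r => ∑' n : ℕ, ((n : ℝ) ^ k + (-(n : ℝ) - 1) ^ k) * szegoWeight r n)
      =ᶠ[𝓝[>] 0] szegoMoment k := by
    filter_upwards [Ioo_mem_nhdsGT one_pos] with r hr
    exact (szegoMoment_eq_tsum_nat k hr.1 hr.2).symm
  have hlim (n : ℕ) : Tendsto (fun r => ((n : ℝ) ^ k + (-(n : ℝ) - 1) ^ k) * szegoWeight r n)
      (𝓝[>] 0) (𝓝 (((n : ℝ) ^ k + (-(n : ℝ) - 1) ^ k) * 0 ^ n)) :=
    (tendsto_szegoWeight_natCast n).const_mul _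
  have hbound : ∀ᶠ r in 𝓝[>] (0 : ℝ), ∀ n : ℕ,
      ‖((n : ℝ) ^ k + (-(n : ℝ) - 1) ^ k) * szegoWeight r n‖ ≤
        2 * ((n : ℝ) + 1) ^ k * (1 / 2) ^ n := by
    filter_upwards [Ioc_mem_nhdsGT (by norm_num : (0 : ℝ) < 1 / 2)] with r hr n
    refine (abs_mul_szegoWeight_le (abs_pow_add_neg_sub_one_pow_le k n) hr.1.le n).trans ?_
    gcongr
    exacts [hr.1.le, hr.2]
  have hsum := (summable_add_one_pow_mul_geometric k (r := 1 / 2) (by norm_num)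
    (by norm_num)).mul_left 2
  simp_rw [← mul_assoc] at hsum
  have := (tendsto_tsum_of_dominated_convergence hsum hlim hbound).congr' hfold
  rwa [tsum_eq_single 0 fun n hn => by simp [hn], pow_zero, mul_one, Nat.cast_zero,
    neg_zero, zero_sub] at this

end Moment

section Sqrt

variable {r : ℝ}

theorem sqrt_zpow_two_mul (hr : 0 ≤ r) (n : ℤ) : √r ^ (2 * n) = r ^ n := by
  rw [zpow_mul, zpow_two, ← sq, sq_sqrt hr]

theorem alpha0_sqrt (hr : 0 ≤ r) : alpha0 r √r = szegoMoment 0 r / (2 * π) := by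
  simp only [alpha0, szegoMoment, szegoWeight, sqrt_zpow_two_mul hr, pow_zero, one_mul]
  ring

theorem alpha1_sqrt (hr : 0 < r) : alpha1 r √r = szegoMoment 1 r / (2 * π * √r) := by
  have hterm (n : ℤ) : (n : ℝ) * √r ^ (2 * n - 1) / (1 + r ^ (2 * n + 1)) =
      (√r)⁻¹ * ((n : ℝ) ^ 1 * szegoWeight r n) := by
    rw [zpow_sub₀ (sqrt_ne_zero'.mpr hr), sqrt_zpow_two_mul hr.le, zpow_one, szegoWeight]
    ring
  simp only [alpha1, szegoMoment, hterm, tsum_mul_left]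
  ring

theorem alpha2_sqrt (hr : 0 < r) : alpha2 r √r = szegoMoment 2 r / (2 * π * r) := by
  have hterm (n : ℤ) : (n : ℝ) ^ 2 * √r ^ (2 * n - 2) / (1 + r ^ (2 * n + 1)) =
      r⁻¹ * ((n : ℝ) ^ 2 * szegoWeight r n) := by
    rw [zpow_sub₀ (sqrt_ne_zero'.mpr hr), sqrt_zpow_two_mul hr.le, szegoWeight]
    norm_num [sq_sqrt hr.le]
    ring
  simp only [alpha2, szegoMoment, hterm, tsum_mul_left]
  ring

theorem mul_szegoMetricSq_sqrt (hr : 0 < r) :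
    r * szegoMetricSq r √r =
      (szegoMoment 0 r * szegoMoment 2 r - szegoMoment 1 r ^ 2) / szegoMoment 0 r ^ 2 := by
  rw [szegoMetricSq, alpha0_sqrt hr.le, alpha1_sqrt hr, alpha2_sqrt hr]
  rcases eq_or_ne (szegoMoment 0 r) 0 with h₀ | h₀
  · simp [h₀]
  field_simp
  rw [sq_sqrt hr.le]
  ring

end Sqrt

/-- For the annulus `Ω_r = {r < |z| < 1}`, the Szegő metric at `√r` in the unit direction
satisfies `lim_{r→0⁺} √r·F_S^{Ω_r}(√r,1) = 1/2`. -/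
theorem szego_metric_annulus_at_sqrt :
    Tendsto (fun r : ℝ => Real.sqrt r * Real.sqrt (szegoMetricSq r (Real.sqrt r)))
      (𝓝[>] (0:ℝ)) (𝓝 (1/2)) := by
  have hratio : Tendsto (fun r => (szegoMoment 0 r * szegoMoment 2 r - szegoMoment 1 r ^ 2) /
      szegoMoment 0 r ^ 2) (𝓝[>] 0) (𝓝 (1 / 4)) := by
    have := (((tendsto_szegoMoment 0).mul (tendsto_szegoMoment 2)).sub
      ((tendsto_szegoMoment 1).pow 2)).div ((tendsto_szegoMoment 0).pow 2) (by norm_num)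
    norm_num at this
    exact this
  have hsqrt : √(1 / 4 : ℝ) = 1 / 2 := by
    rw [show (1 / 4 : ℝ) = (1 / 2) ^ 2 by norm_num, sqrt_sq (by norm_num)]
  rw [← hsqrt]
  refine hratio.sqrt.congr' ?_
  filter_upwards [self_mem_nhdsWithin] with r (hr : 0 < r)
  rw [← mul_szegoMetricSq_sqrt hr, sqrt_mul hr.le]
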